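/- Let p ∈ (0,1), c > 0, μ ∈ ℝ, and 0 < Σ₀ < Σ₁, set f₀(y) = φ(y; 0, Σ₀), f₁(y) = φ(y; μ, Σ₁), and suppose D = μ² + (Σ₁ − Σ₀)(log(Σ₁/Σ₀) + 2 log((1−p)/(cp))) ≥ 0. Then the optimal Bayes risk satisfies ∫_ℝ min{(1−p)f₀(y), cp f₁(y)} dy = (1−p)[Φ((√Σ₀ μ − √(Σ₁D))/(Σ₁ − Σ₀)) + Φ((−√Σ₀ μ − √(Σ₁D))/(Σ₁ − Σ₀))] + cp[Φ((−√Σ₁ μ + √(Σ₀D))/(Σ₁ − Σ₀)) − Φ((−√Σ₁ μ − √(Σ₀D))/(Σ₁ − Σ₀))]. -/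

import Mathlib

open MeasureTheory

noncomputable def gaussPDF (m v y : ℝ) : ℝ :=
  (Real.sqrt (2 * Real.pi * v))⁻¹ * Real.exp (-(y - m) ^ 2 / (2 * v))

noncomputable def stdGaussCDF (z : ℝ) : ℝ := ∫ t in Set.Iic z, gaussPDF 0 1 t

/-!
The log-likelihood ratio `log (c p f₁ y) - log ((1 - p) f₀ y)` is a quadratic in `y` with
positive leading coefficient `(Σ₁ - Σ₀) / (2 Σ₀ Σ₁)`, and its discriminant is a positive multiple
of `D`. Its roots `r₁ ≤ r₂` therefore cut the line into `(-∞, r₁] ∪ (r₂, ∞)`, where the minimum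
is `(1 - p) f₀`, and `(r₁, r₂]`, where it is `c p f₁`. Each piece is the Gaussian probability of
an interval, i.e. `Φ` at standardized endpoints, and the right tail `(r₂, ∞)` becomes a value of
`Φ` by the symmetry of the standard Gaussian.
-/

open ProbabilityTheory Set Real
open scoped NNReal

lemma gaussPDF_eq_gaussianPDFReal (m : ℝ) {v : ℝ} (hv : 0 ≤ v) :
    gaussPDF m v = gaussianPDFReal m v.toNNReal := by
  funext y
  simp only [gaussPDF, gaussianPDFReal, Real.coe_toNNReal v hv]

lemma integrable_gaussPDF (m : ℝ) {v : ℝ} (hv : 0 ≤ v) : Integrable (gaussPDF m v) := by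
  rw [gaussPDF_eq_gaussianPDFReal m hv]
  exact integrable_gaussianPDFReal m _

lemma setIntegral_gaussPDF (m : ℝ) {v : ℝ} (hv : 0 < v) (s : Set ℝ) :
    ∫ t in s, gaussPDF m v t = (gaussianReal m v.toNNReal).real s := by
  rw [gaussPDF_eq_gaussianPDFReal m hv.le, measureReal_def,
    gaussianReal_apply_eq_integral _ (by simpa using hv) s,
    ENNReal.toReal_ofReal (integral_nonneg fun _ ↦ gaussianPDFReal_nonneg _ _ _)]

lemma stdGaussCDF_eq_measureReal_Iic (z : ℝ) :
    stdGaussCDF z = (gaussianReal 0 1).real (Iic z) := by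
  rw [stdGaussCDF, setIntegral_gaussPDF 0 one_pos, Real.toNNReal_one]

lemma gaussianReal_eq_map_stdGaussian (m : ℝ) (v : ℝ≥0) :
    gaussianReal m v = (gaussianReal 0 1).map (fun u ↦ √v * u + m) := by
  have h : (fun u ↦ √v * u + m) = (· + m) ∘ (√v * ·) := rfl
  rw [h, ← Measure.map_map (by fun_prop) (by fun_prop), gaussianReal_map_const_mul,
    gaussianReal_map_add_const]
  congr 1
  · simp
  · ext; simp

lemma measureReal_gaussianReal_eq_preimage (m : ℝ) (v : ℝ≥0) {s : Set ℝ}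
    (hs : MeasurableSet s) :
    (gaussianReal m v).real s = (gaussianReal 0 1).real ((fun u ↦ √v * u + m) ⁻¹' s) := by
  rw [gaussianReal_eq_map_stdGaussian, map_measureReal_apply (by fun_prop) hs]

lemma measureReal_stdGaussian_Ioi (w : ℝ) : (gaussianReal 0 1).real (Ioi w) = stdGaussCDF (-w) := by
  have : NullSingletonClass (gaussianReal 0 1) := nullSingletonClass_gaussianReal one_ne_zero
  calc (gaussianReal 0 1).real (Ioi w) = (gaussianReal 0 1).real (Ici w) :=
        measureReal_congr Ioi_ae_eq_Ici
    _ = ((gaussianReal 0 1).map (-·)).real (Iic (-w)) := by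
        rw [map_measureReal_apply (by fun_prop) measurableSet_Iic]
        congr 1; ext; simp
    _ = stdGaussCDF (-w) := by
        rw [gaussianReal_map_neg, neg_zero, stdGaussCDF_eq_measureReal_Iic]

lemma integral_Iic_gaussPDF (m : ℝ) {v : ℝ} (hv : 0 < v) (z : ℝ) :
    ∫ t in Iic z, gaussPDF m v t = stdGaussCDF ((z - m) / √v) := by
  rw [setIntegral_gaussPDF m hv, measureReal_gaussianReal_eq_preimage _ _ measurableSet_Iic,
    stdGaussCDF_eq_measureReal_Iic, Real.coe_toNNReal _ hv.le]
  congr 1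
  ext u
  simp [le_div_iff₀ (sqrt_pos.2 hv), mul_comm u, ← le_sub_iff_add_le]

lemma integral_Ioi_gaussPDF (m : ℝ) {v : ℝ} (hv : 0 < v) (z : ℝ) :
    ∫ t in Ioi z, gaussPDF m v t = stdGaussCDF ((m - z) / √v) := by
  rw [setIntegral_gaussPDF m hv, measureReal_gaussianReal_eq_preimage _ _ measurableSet_Ioi,
    Real.coe_toNNReal _ hv.le, ← neg_sub z m, neg_div, ← measureReal_stdGaussian_Ioi]
  congr 1
  ext u
  simp [div_lt_iff₀ (sqrt_pos.2 hv), mul_comm u, ← sub_lt_iff_lt_add]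

lemma integral_Ioc_gaussPDF (m : ℝ) {v : ℝ} (hv : 0 < v) {z₁ z₂ : ℝ} (h : z₁ ≤ z₂) :
    ∫ t in Ioc z₁ z₂, gaussPDF m v t =
      stdGaussCDF ((z₂ - m) / √v) - stdGaussCDF ((z₁ - m) / √v) := by
  rw [← integral_Iic_gaussPDF m hv, ← integral_Iic_gaussPDF m hv, setIntegral_gaussPDF m hv,
    setIntegral_gaussPDF m hv, setIntegral_gaussPDF m hv, ← Iic_sdiff_Iic,
    measureReal_sdiff (Iic_subset_Iic.2 h) measurableSet_Iic]

lemma integral_min_eq_of_quadratic_sign {f g : ℝ → ℝ} (hf : Integrable f) (hg : Integrable g)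
    {r₁ r₂ : ℝ} (hr : r₁ ≤ r₂) (hfg : ∀ y, 0 ≤ (y - r₁) * (y - r₂) → f y ≤ g y)
    (hgf : ∀ y, (y - r₁) * (y - r₂) ≤ 0 → g y ≤ f y) :
    ∫ y, min (f y) (g y) =
      (∫ y in Iic r₁, f y) + (∫ y in Ioc r₁ r₂, g y) + ∫ y in Ioi r₂, f y := by
  have hmin : Integrable fun y ↦ min (f y) (g y) := hf.inf hg
  rw [← intervalIntegral.integral_Iic_add_Ioi hmin.integrableOn hmin.integrableOn,
    ← Ioc_union_Ioi_eq_Ioi hr,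
    setIntegral_union (Ioc_disjoint_Ioi le_rfl) measurableSet_Ioi hmin.integrableOn
      hmin.integrableOn, ← add_assoc]
  congr 1
  · congr 1
    · refine setIntegral_congr_fun measurableSet_Iic fun y hy ↦ min_eq_left (hfg y ?_)
      exact mul_nonneg_of_nonpos_of_nonpos (sub_nonpos.2 hy) (sub_nonpos.2 (hy.trans hr))
    · refine setIntegral_congr_fun measurableSet_Ioc fun y hy ↦ min_eq_right (hgf y ?_)
      exact mul_nonpos_of_nonneg_of_nonpos (sub_nonneg.2 hy.1.le) (sub_nonpos.2 hy.2)
  · refine setIntegral_congr_fun measurableSet_Ioi fun y hy ↦ min_eq_left (hfg y ?_)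
    exact mul_nonneg (sub_nonneg.2 (hr.trans hy.le)) (sub_nonneg.2 hy.le)

lemma log_mul_gaussPDF {a : ℝ} (ha : 0 < a) (m : ℝ) {v : ℝ} (hv : 0 < v) (y : ℝ) :
    log (a * gaussPDF m v y) = log a - log (2 * π * v) / 2 - (y - m) ^ 2 / (2 * v) := by
  have hs : 0 < √(2 * π * v) := sqrt_pos.2 (by positivity)
  rw [gaussPDF, log_mul ha.ne' (by positivity), log_mul (inv_ne_zero hs.ne') (exp_pos _).ne',
    log_inv, log_sqrt (by positivity), log_exp]
  ring

lemma log_mul_gaussPDF_sub_log_mul_gaussPDF {a b μ S₀ S₁ D k : ℝ} (ha : 0 < a) (hb : 0 < b)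
    (hS₀ : 0 < S₀) (hS : S₀ < S₁)
    (hD : D = μ ^ 2 + (S₁ - S₀) * (log (S₁ / S₀) + 2 * log (a / b))) (hk : k ^ 2 = S₀ * S₁ * D)
    (y : ℝ) :
    log (b * gaussPDF μ S₁ y) - log (a * gaussPDF 0 S₀ y) =
      (S₁ - S₀) / (2 * S₀ * S₁) *
        ((y - (-(S₀ * μ) - k) / (S₁ - S₀)) * (y - (-(S₀ * μ) + k) / (S₁ - S₀))) := by
  have hS₁ : 0 < S₁ := hS₀.trans hS
  have hd : S₁ - S₀ ≠ 0 := (sub_pos.2 hS).ne'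
  rw [log_div hS₁.ne' hS₀.ne', log_div ha.ne' hb.ne'] at hD
  rw [log_mul_gaussPDF hb μ hS₁, log_mul_gaussPDF ha 0 hS₀, log_mul (by positivity) hS₀.ne',
    log_mul (by positivity) hS₁.ne']
  field_simp
  linear_combination hk + S₀ * S₁ * hD

lemma integral_min_mul_gaussPDF {a b μ S₀ S₁ D k : ℝ} (ha : 0 < a) (hb : 0 < b)
    (hS₀ : 0 < S₀) (hS : S₀ < S₁)
    (hD : D = μ ^ 2 + (S₁ - S₀) * (log (S₁ / S₀) + 2 * log (a / b))) (hk : k ^ 2 = S₀ * S₁ * D)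
    (hk₀ : 0 ≤ k) :
    ∫ y, min (a * gaussPDF 0 S₀ y) (b * gaussPDF μ S₁ y) =
      a * stdGaussCDF ((-(S₀ * μ) - k) / (S₁ - S₀) / √S₀) +
        b * (stdGaussCDF (((-(S₀ * μ) + k) / (S₁ - S₀) - μ) / √S₁) -
          stdGaussCDF (((-(S₀ * μ) - k) / (S₁ - S₀) - μ) / √S₁)) +
        a * stdGaussCDF (-((-(S₀ * μ) + k) / (S₁ - S₀)) / √S₀) := by
  have hS₁ : 0 < S₁ := hS₀.trans hS
  have hr : (-(S₀ * μ) - k) / (S₁ - S₀) ≤ (-(S₀ * μ) + k) / (S₁ - S₀) :=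
    div_le_div_of_nonneg_right (by linarith) (sub_pos.2 hS).le
  have hlog := log_mul_gaussPDF_sub_log_mul_gaussPDF ha hb hS₀ hS hD hk
  have hcoef : 0 ≤ (S₁ - S₀) / (2 * S₀ * S₁) := div_nonneg (sub_pos.2 hS).le (by positivity)
  have hpos₀ (y : ℝ) : 0 < a * gaussPDF 0 S₀ y := by unfold gaussPDF; positivity
  have hpos₁ (y : ℝ) : 0 < b * gaussPDF μ S₁ y := by unfold gaussPDF; positivity
  rw [integral_min_eq_of_quadratic_sign ((integrable_gaussPDF 0 hS₀.le).const_mul _)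
      ((integrable_gaussPDF μ hS₁.le).const_mul _) hr
      (fun y hy ↦ (log_le_log_iff (hpos₀ y) (hpos₁ y)).1 <| sub_nonneg.1 <| by
        rw [hlog]; exact mul_nonneg hcoef hy)
      (fun y hy ↦ (log_le_log_iff (hpos₁ y) (hpos₀ y)).1 <| sub_nonpos.1 <| by
        rw [hlog]; exact mul_nonpos_of_nonneg_of_nonpos hcoef hy),
    integral_const_mul, integral_const_mul, integral_const_mul, integral_Iic_gaussPDF 0 hS₀,
    integral_Ioc_gaussPDF μ hS₁ hr, integral_Ioi_gaussPDF 0 hS₀, sub_zero, zero_sub]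

/-- Optimal Bayes risk between `f₀ = φ(·; 0, Σ₀)` and `f₁ = φ(·; μ, Σ₁)`
with `0 < Σ₀ < Σ₁` and non-negative discriminant `D`:
`∫ min{(1−p)f₀, cp f₁}
  = (1−p)[Φ((√Σ₀μ − √(Σ₁D))/(Σ₁−Σ₀)) + Φ((−√Σ₀μ − √(Σ₁D))/(Σ₁−Σ₀))]
    + cp[Φ((−√Σ₁μ + √(Σ₀D))/(Σ₁−Σ₀)) − Φ((−√Σ₁μ − √(Σ₀D))/(Σ₁−Σ₀))]`. -/
theorem stmt16 (p c μ S₀ S₁ : ℝ) (hp : p ∈ Set.Ioo (0 : ℝ) 1) (hc : 0 < c)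
    (hS₀ : 0 < S₀) (hS : S₀ < S₁)
    (D : ℝ)
    (hD : D = μ ^ 2 + (S₁ - S₀) * (Real.log (S₁ / S₀) + 2 * Real.log ((1 - p) / (c * p))))
    (hDpos : 0 ≤ D) :
    (∫ y : ℝ, min ((1 - p) * gaussPDF 0 S₀ y) (c * p * gaussPDF μ S₁ y)) =
      (1 - p) * (stdGaussCDF ((Real.sqrt S₀ * μ - Real.sqrt (S₁ * D)) / (S₁ - S₀)) +
          stdGaussCDF ((-(Real.sqrt S₀) * μ - Real.sqrt (S₁ * D)) / (S₁ - S₀))) +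
        c * p * (stdGaussCDF ((-(Real.sqrt S₁) * μ + Real.sqrt (S₀ * D)) / (S₁ - S₀)) -
          stdGaussCDF ((-(Real.sqrt S₁) * μ - Real.sqrt (S₀ * D)) / (S₁ - S₀))) := by
  have hS₁ : 0 < S₁ := hS₀.trans hS
  have hk : (√S₀ * √S₁ * √D) ^ 2 = S₀ * S₁ * D := by
    rw [mul_pow, mul_pow, sq_sqrt hS₀.le, sq_sqrt hS₁.le, sq_sqrt hDpos]
  rw [integral_min_mul_gaussPDF (sub_pos.2 hp.2) (mul_pos hc hp.1) hS₀ hS hD hk (by positivity)]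
  have hd : S₁ - S₀ ≠ 0 := (sub_pos.2 hS).ne'
  have h₀ : √S₀ ^ 2 = S₀ := sq_sqrt hS₀.le
  have h₁ : √S₁ ^ 2 = S₁ := sq_sqrt hS₁.le
  rw [sqrt_mul hS₀.le, sqrt_mul hS₁.le,
    show (-(S₀ * μ) - √S₀ * √S₁ * √D) / (S₁ - S₀) / √S₀ = (-√S₀ * μ - √S₁ * √D) / (S₁ - S₀) by
      field_simp; linear_combination μ * h₀,
    show -((-(S₀ * μ) + √S₀ * √S₁ * √D) / (S₁ - S₀)) / √S₀ = (√S₀ * μ - √S₁ * √D) / (S₁ - S₀) by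
      field_simp; linear_combination -μ * h₀,
    show ((-(S₀ * μ) + √S₀ * √S₁ * √D) / (S₁ - S₀) - μ) / √S₁ =
        (-√S₁ * μ + √S₀ * √D) / (S₁ - S₀) by
      field_simp; linear_combination μ * h₁,
    show ((-(S₀ * μ) - √S₀ * √S₁ * √D) / (S₁ - S₀) - μ) / √S₁ =
        (-√S₁ * μ - √S₀ * √D) / (S₁ - S₀) by
      field_simp; linear_combination μ * h₁]
  ring
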